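/- arXiv:1312.2992 — 3 statements merged into one kernel-verified Lean document; each statement's English description precedes it below -/
import Mathlib

section
/- Let n ≥ 1, k ≥ 1, let R be an n×n complex matrix with Rᵏ = 1 (the identity matrix), and let ζ ∈ ℂ be a primitive k-th root of unity. Then there exists a map Ψ : ℂ → M(n,ℂ) such that: Ψ is analytic at every point of ℂ ∖ {0}; Ψ(z) is invertible for every z ≠ 0; every entry of Ψ is meromorphic at 0; and Ψ(ζ⁻¹·z) = Ψ(z)·R for every z ≠ 0. -/
/-!
Put `P t = k⁻¹ ∑_{m<k} ζ^{tm} Rᵐ` for `t < k`. Since `Rᵏ = 1`, these are the projections onto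
the `ζ^{-t}`-eigenspaces of `R`: `P t * R = ζ^{-t} P t`, `P t * P s = δ_{ts} P t` and
`∑ P t = 1`, all by the orthogonality `∑_{m<k} ωᵐ = 0` for `ω ≠ 1`, `ωᵏ = 1`. Then
`Ψ z = ∑_{t<k} zᵗ P t` (that is, `z^N` for the grading operator `N` acting by `t` on the
`ζ^{-t}`-eigenspace) is polynomial in `z`, multiplicative with `Ψ 1 = 1`, hence invertible for
`z ≠ 0`, and satisfies `Ψ (ζ⁻¹ z) = Ψ z * R`.
-/

open Finset

theorem geom_sum_eq_zero_of_pow_eq_one {K : Type*} [DivisionRing K] {ω : K} {k : ℕ} (h : ω ^ k = 1)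
    (hω : ω ≠ 1) : ∑ m ∈ range k, ω ^ m = 0 := by
  rw [geom_sum_eq hω, h, sub_self, zero_div]

section
variable {K A : Type*} [Field K] [Ring A] [Algebra K A]

def eigenproj (k : ℕ) (ζ : K) (R : A) (t : ℕ) : A :=
  (k : K)⁻¹ • ∑ m ∈ range k, (ζ ^ t) ^ m • R ^ m

def gradedPow (k : ℕ) (ζ : K) (R : A) (z : K) : A :=
  ∑ t ∈ range k, z ^ t • eigenproj k ζ R t

variable {k : ℕ} {ζ : K} {R : A}

theorem eigenproj_mul_self (hζ : ζ ^ k = 1) (hR : R ^ k = 1) (t : ℕ) :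
    eigenproj k ζ R t * R = ζ⁻¹ ^ t • eigenproj k ζ R t := by
  have hζt : (ζ ^ t) ^ k = 1 := by rw [← pow_mul, mul_comm, pow_mul, hζ, one_pow]
  have shift : ∑ m ∈ range k, (ζ ^ t) ^ (m + 1) • R ^ (m + 1) =
      ∑ m ∈ range k, (ζ ^ t) ^ m • R ^ m := by
    have h1 := sum_range_succ (fun m => (ζ ^ t) ^ m • R ^ m) k
    have h2 := sum_range_succ' (fun m => (ζ ^ t) ^ m • R ^ m) k
    simp only [hζt, hR, pow_zero, one_smul] at h1 h2
    exact add_right_cancel (h2.symm.trans h1)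
  rcases eq_or_ne ζ 0 with rfl | hζ0
  · obtain rfl : k = 0 := zero_pow_eq_one₀.1 hζ
    simp [eigenproj]
  calc eigenproj k ζ R t * R = (k : K)⁻¹ • ∑ m ∈ range k, (ζ ^ t) ^ m • R ^ m * R := by
        rw [eigenproj, smul_mul_assoc, sum_mul]
    _ = (k : K)⁻¹ • ∑ m ∈ range k, ζ⁻¹ ^ t • (ζ ^ t) ^ (m + 1) • R ^ (m + 1) := by
        congr 1
        refine sum_congr rfl fun m _ => ?_
        rw [smul_mul_assoc, ← pow_succ, smul_smul, pow_succ' (ζ ^ t) m, inv_pow,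
          inv_mul_cancel_left₀ (pow_ne_zero _ hζ0)]
    _ = ζ⁻¹ ^ t • eigenproj k ζ R t := by
        rw [← Finset.smul_sum, shift, smul_comm, eigenproj]

theorem eigenproj_mul_pow (hζ : ζ ^ k = 1) (hR : R ^ k = 1) (t m : ℕ) :
    eigenproj k ζ R t * R ^ m = (ζ⁻¹ ^ t) ^ m • eigenproj k ζ R t := by
  induction m with
  | zero => simp
  | succ m ih =>
    rw [pow_succ, ← mul_assoc, ih, smul_mul_assoc, eigenproj_mul_self hζ hR, smul_smul, pow_succ]

theorem eigenproj_mul_eigenproj [NeZero k] (hζ : IsPrimitiveRoot ζ k) (hR : R ^ k = 1) {t s : ℕ}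
    (ht : t < k) (hs : s < k) :
    eigenproj k ζ R t * eigenproj k ζ R s = if t = s then eigenproj k ζ R t else 0 := by
  have hk : (k : K) ≠ 0 := hζ.neZero'.out
  have hζ0 : ζ ≠ 0 := hζ.ne_zero (NeZero.ne k)
  have hP : eigenproj k ζ R t * eigenproj k ζ R s
      = ((k : K)⁻¹ * ∑ m ∈ range k, (ζ ^ s * ζ⁻¹ ^ t) ^ m) • eigenproj k ζ R t := by
    rw [eigenproj.eq_1 k ζ R s, mul_smul_comm, mul_sum]
    simp only [mul_smul_comm, eigenproj_mul_pow hζ.pow_eq_one hR, smul_smul, ← mul_pow,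
      ← sum_smul]
  split_ifs with hts
  · rw [hP, hts, inv_pow, mul_inv_cancel₀ (pow_ne_zero _ hζ0)]
    simp [hk]
  · have hω : (ζ ^ s * ζ⁻¹ ^ t) ^ k = 1 := by
      rw [mul_pow, ← pow_mul, ← pow_mul, mul_comm s, mul_comm t, pow_mul, pow_mul, hζ.pow_eq_one,
        hζ.inv.pow_eq_one, one_pow, one_pow, one_mul]
    have hω1 : ζ ^ s * ζ⁻¹ ^ t ≠ 1 := by
      rw [inv_pow, Ne, mul_inv_eq_one₀ (pow_ne_zero _ hζ0)]
      exact fun h => hts (hζ.pow_inj ht hs h.symm)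
    rw [hP, geom_sum_eq_zero_of_pow_eq_one hω hω1, mul_zero, zero_smul]

theorem sum_eigenproj [NeZero k] (hζ : IsPrimitiveRoot ζ k) :
    ∑ t ∈ range k, eigenproj k ζ R t = 1 := by
  have hk : (k : K) ≠ 0 := hζ.neZero'.out
  have hgeom : ∀ m ∈ range k, m ≠ 0 → ∑ t ∈ range k, (ζ ^ m) ^ t = 0 := fun m hm hm0 =>
    geom_sum_eq_zero_of_pow_eq_one (by rw [← pow_mul, mul_comm, pow_mul, hζ.pow_eq_one, one_pow])
      (hζ.pow_ne_one_of_pos_of_lt hm0 (mem_range.1 hm))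
  calc ∑ t ∈ range k, eigenproj k ζ R t
      = (k : K)⁻¹ • ∑ m ∈ range k, (∑ t ∈ range k, (ζ ^ m) ^ t) • R ^ m := by
        simp only [eigenproj, ← Finset.smul_sum, sum_smul]
        rw [sum_comm]
        exact congrArg _ <| sum_congr rfl fun m _ => sum_congr rfl fun t _ => by
          rw [pow_right_comm]
    _ = 1 := by
        rw [sum_eq_single_of_mem 0 (mem_range.2 (Nat.pos_of_neZero k))
          fun m hm hm0 => by rw [hgeom m hm hm0, zero_smul]]
        simp [smul_smul, hk]

theorem gradedPow_mul [NeZero k] (hζ : IsPrimitiveRoot ζ k) (hR : R ^ k = 1) (z w : K) :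
    gradedPow k ζ R z * gradedPow k ζ R w = gradedPow k ζ R (z * w) := by
  rw [gradedPow, gradedPow, sum_mul_sum]
  refine sum_congr rfl fun t ht => ?_
  rw [sum_congr rfl fun s hs => by
    rw [smul_mul_smul_comm, eigenproj_mul_eigenproj hζ hR (mem_range.1 ht) (mem_range.1 hs)]]
  simp only [smul_ite, smul_zero, sum_ite_eq, if_pos ht, mul_pow]

theorem gradedPow_one [NeZero k] (hζ : IsPrimitiveRoot ζ k) : gradedPow k ζ R 1 = 1 := by
  simp [gradedPow, sum_eigenproj hζ]

theorem isUnit_gradedPow [NeZero k] (hζ : IsPrimitiveRoot ζ k) (hR : R ^ k = 1) {z : K}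
    (hz : z ≠ 0) : IsUnit (gradedPow k ζ R z) :=
  ⟨⟨gradedPow k ζ R z, gradedPow k ζ R z⁻¹,
    by rw [gradedPow_mul hζ hR, mul_inv_cancel₀ hz, gradedPow_one hζ],
    by rw [gradedPow_mul hζ hR, inv_mul_cancel₀ hz, gradedPow_one hζ]⟩, rfl⟩

theorem gradedPow_inv_mul (hζ : ζ ^ k = 1) (hR : R ^ k = 1) (z : K) :
    gradedPow k ζ R (ζ⁻¹ * z) = gradedPow k ζ R z * R := by
  simp only [gradedPow, sum_mul, smul_mul_assoc, eigenproj_mul_self hζ hR, smul_smul, mul_pow,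
    mul_comm]

end

theorem analyticAt_gradedPow_apply {𝕜 ι : Type*} [NontriviallyNormedField 𝕜] [Fintype ι]
    [DecidableEq ι] (k : ℕ) (ζ : 𝕜) (R : Matrix ι ι 𝕜) (z : 𝕜) (i j : ι) :
    AnalyticAt 𝕜 (fun w => gradedPow k ζ R w i j) z := by
  simp only [gradedPow, Matrix.sum_apply, Matrix.smul_apply, smul_eq_mul]
  fun_prop

theorem stmt11_general (n k : ℕ) (hk : 1 ≤ k)
    (R : Matrix (Fin n) (Fin n) ℂ) (hR : R ^ k = 1)
    (ζ : ℂ) (hζ : IsPrimitiveRoot ζ k) :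
    ∃ Ψ : ℂ → Matrix (Fin n) (Fin n) ℂ,
      (∀ z : ℂ, z ≠ 0 → ∀ i j : Fin n, AnalyticAt ℂ (fun w => Ψ w i j) z) ∧
      (∀ z : ℂ, z ≠ 0 → IsUnit (Ψ z)) ∧
      (∀ i j : Fin n, MeromorphicAt (fun w => Ψ w i j) 0) ∧
      (∀ z : ℂ, z ≠ 0 → Ψ (ζ⁻¹ * z) = Ψ z * R) := by
  have : NeZero k := ⟨by omega⟩
  exact ⟨gradedPow k ζ R,
    fun z _ => analyticAt_gradedPow_apply k ζ R z,
    fun _ hz => isUnit_gradedPow hζ hR hz,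
    fun i j => (analyticAt_gradedPow_apply k ζ R 0 i j).meromorphicAt,
    fun z _ => gradedPow_inv_mul hζ.pow_eq_one hR z⟩

/-- For `R` with `Rᵏ = 1` and `ζ` a primitive `k`-th root of unity, there is a map
`Ψ : ℂ → M(n,ℂ)`, analytic and invertible away from `0`, with entries meromorphic at `0`,
satisfying `Ψ(ζ⁻¹·z) = Ψ(z)·R` for `z ≠ 0`. -/
theorem stmt11 (n k : ℕ) (hn : 1 ≤ n) (hk : 1 ≤ k)
    (R : Matrix (Fin n) (Fin n) ℂ) (hR : R ^ k = 1)
    (ζ : ℂ) (hζ : IsPrimitiveRoot ζ k) :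
    ∃ Ψ : ℂ → Matrix (Fin n) (Fin n) ℂ,
      (∀ z : ℂ, z ≠ 0 → ∀ i j : Fin n, AnalyticAt ℂ (fun w => Ψ w i j) z) ∧
      (∀ z : ℂ, z ≠ 0 → IsUnit (Ψ z)) ∧
      (∀ i j : Fin n, MeromorphicAt (fun w => Ψ w i j) 0) ∧
      (∀ z : ℂ, z ≠ 0 → Ψ (ζ⁻¹ * z) = Ψ z * R) :=
  stmt11_general n k hk R hR ζ hζ
end

section
/- The matrix exponential is surjective onto GL(n,ℂ): for every n ≥ 1 and every invertible n×n complex matrix R, there exists an n×n complex matrix B with exp(B) = R. In particular, for every R ∈ GL(n,ℂ) there exists B with exp(2πi B) = R. -/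
/-!
`R` is annihilated by its characteristic polynomial `χ`, and `χ(0) ≠ 0`. Over `ℂ`,
`χ = c ∏ (X - λ)^(m λ)` with every `λ ≠ 0`, and Bezout identities between these coprime factors
split `1` into orthogonal idempotents `e_λ`, polynomials in `R`, with `(R - λ)^(m λ) e_λ = 0`.
On the corner of `e_λ`, `R = λ (1 + u)` with `u` nilpotent, so there `R` is the exponential of
`log λ + log (1 + u)`, where the logarithm series is a finite sum. That `exp (log (1 + u)) = 1 + u`
comes from the congruence `exp ∘ log (1 + X) ≡ 1 + X mod X^(n+1)` for the truncated series,
which holds because both sides satisfy `(1 + X) H' = H` modulo `X^n` and this differential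
equation determines `H mod X^(n+1)` from `H(0)`. All these elements lie in the commutative
algebra `ℂ[R]`, where `exp` turns sums into products.
-/

open Polynomial NormedSpace
open scoped Nat

namespace Polynomial

theorem X_pow_succ_dvd_of_X_pow_dvd_one_add_X_mul_derivative_sub {K : Type*} [CommRing K]
    [NoZeroDivisors K] [CharZero K] {H : K[X]} {n : ℕ} (h0 : H.coeff 0 = 0)
    (h : X ^ n ∣ (1 + X) * derivative H - H) : X ^ (n + 1) ∣ H := by
  rw [X_pow_dvd_iff] at h ⊢
  intro d hd
  induction d with
  | zero => exact h0
  | succ d ih =>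
    have hcoeff := h d (by omega)
    have hXd : (X * derivative H).coeff d = 0 := by
      rcases d with _ | d
      · simp
      · rw [coeff_X_mul, coeff_derivative, ih (by omega), zero_mul]
    rw [coeff_sub, add_mul, one_mul, coeff_add, hXd, add_zero, ih (by omega), sub_zero,
      coeff_derivative] at hcoeff
    exact (mul_eq_zero.mp hcoeff).resolve_right (Nat.cast_add_one_ne_zero d)

theorem aeval_eq_zero_of_X_pow_dvd {R A : Type*} [CommSemiring R] [Semiring A] [Algebra R A]
    {p : R[X]} {u : A} {m : ℕ} (hp : X ^ m ∣ p) (hu : u ^ m = 0) : aeval u p = 0 := by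
  obtain ⟨r, rfl⟩ := hp
  simp [hu]

theorem one_add_X_mul_derivative_trunc_log (n : ℕ) :
    (1 + X) * derivative (PowerSeries.trunc (n + 1) (PowerSeries.log ℚ)) = 1 - (-X) ^ n := by
  have hgeom : derivative (PowerSeries.trunc (n + 1) (PowerSeries.log ℚ)) =
      ∑ i ∈ Finset.range n, (-X) ^ i := by
    rw [← PowerSeries.trunc_derivative, PowerSeries.deriv_log, PowerSeries.trunc_apply,
      Nat.Ico_zero_eq_range]
    refine Finset.sum_congr rfl fun i _ => ?_
    rw [neg_pow, ← C_mul_X_pow_eq_monomial, PowerSeries.coeff_mk]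
    simp
  rw [hgeom]
  linear_combination -(geom_sum_mul (-X : ℚ[X]) n)

theorem X_dvd_trunc_log (n : ℕ) : (X : ℚ[X]) ∣ PowerSeries.trunc n (PowerSeries.log ℚ) := by
  rw [X_dvd_iff, PowerSeries.coeff_trunc]
  split_ifs <;> simp

theorem X_pow_succ_dvd_trunc_exp_comp_trunc_log_sub (n : ℕ) :
    (X : ℚ[X]) ^ (n + 1) ∣ (PowerSeries.trunc (n + 1) (PowerSeries.exp ℚ)).comp
      (PowerSeries.trunc (n + 1) (PowerSeries.log ℚ)) - (1 + X) := by
  have hE : PowerSeries.trunc (n + 1) (PowerSeries.exp ℚ) - PowerSeries.trunc n (PowerSeries.exp ℚ)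
      = C (PowerSeries.coeff n (PowerSeries.exp ℚ)) * X ^ n := by
    rw [PowerSeries.trunc_succ, C_mul_X_pow_eq_monomial]
    ring
  set E := PowerSeries.trunc (n + 1) (PowerSeries.exp ℚ)
  set E' := PowerSeries.trunc n (PowerSeries.exp ℚ)
  set L := PowerSeries.trunc (n + 1) (PowerSeries.log ℚ)
  have hE' : derivative E = E' := by
    rw [← PowerSeries.trunc_derivative, PowerSeries.derivative_exp]
  apply X_pow_succ_dvd_of_X_pow_dvd_one_add_X_mul_derivative_sub
  · have hL : L.eval 0 = 0 := by simp [L, ← coeff_zero_eq_eval_zero, PowerSeries.coeff_trunc]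
    rw [coeff_sub, coeff_zero_eq_eval_zero, eval_comp, hL, ← coeff_zero_eq_eval_zero,
      PowerSeries.coeff_trunc, if_pos n.succ_pos]
    simp
  · have hode : (1 + X) * derivative (E.comp L - (1 + X)) - (E.comp L - (1 + X)) =
        -(C (PowerSeries.coeff n (PowerSeries.exp ℚ)) * L ^ n) - (-X) ^ n * E'.comp L := by
      have hcomp := congrArg (comp · L) hE
      simp only [sub_comp, mul_comp, C_comp, X_pow_comp] at hcomp
      rw [derivative_sub, derivative_comp, hE', derivative_add, derivative_one, derivative_X]
      linear_combination E'.comp L * one_add_X_mul_derivative_trunc_log n - hcomp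
    rw [hode]
    refine dvd_sub (dvd_neg.mpr (dvd_mul_of_dvd_right (pow_dvd_pow_of_dvd (X_dvd_trunc_log _) n) _))
      (dvd_mul_of_dvd_left ?_ _)
    rw [neg_pow]
    exact dvd_mul_left _ _

end Polynomial

theorem IsIdempotentElem.exists_split_of_isCoprime {R : Type*} [CommRing R] {p q e : R}
    (hpq : IsCoprime p q) (he : IsIdempotentElem e) (h : p * q * e = 0) :
    ∃ e₁ e₂ : R, IsIdempotentElem e₁ ∧ IsIdempotentElem e₂ ∧ e₁ * e₂ = 0 ∧ e₁ + e₂ = e ∧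
      p * e₁ = 0 ∧ q * e₂ = 0 := by
  obtain ⟨a, b, hab⟩ := hpq
  have horth : b * q * e * (a * p * e) = 0 := by linear_combination (a * b * e) * h
  refine ⟨b * q * e, a * p * e, ?_, ?_, horth, by linear_combination e * hab, ?_, ?_⟩
  · show b * q * e * (b * q * e) = b * q * e
    linear_combination b ^ 2 * q ^ 2 * he.eq + b * q * e * hab - a * b * h
  · show a * p * e * (a * p * e) = a * p * e
    linear_combination a ^ 2 * p ^ 2 * he.eq + a * p * e * hab - a * b * h
  · linear_combination b * h
  · linear_combination a * h

theorem isCoprime_sub_algebraMap {K A : Type*} [Field K] [CommRing A] [Algebra K A] (x : A)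
    {a b : K} (hab : a ≠ b) : IsCoprime (x - algebraMap K A a) (x - algebraMap K A b) := by
  simpa using (isCoprime_X_sub_C_of_isUnit_sub (sub_ne_zero.mpr hab).isUnit).map
    (aeval x).toRingHom

namespace NormedSpace

theorem exp_eq_aeval_trunc_of_pow_eq_zero {A : Type*} [NormedRing A] [NormedAlgebra ℚ A] {x : A}
    {k : ℕ} (hx : x ^ k = 0) : exp x = aeval x (PowerSeries.trunc k (PowerSeries.exp ℚ)) := by
  rw [exp_eq_tsum_rat]
  beta_reduce
  rw [tsum_eq_sum (s := Finset.range k), aeval_def, PowerSeries.eval₂_trunc_eq_sum_range]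
  · refine Finset.sum_congr rfl fun i _ => ?_
    simp [Algebra.smul_def]
  · intro i hi
    rw [pow_eq_zero_of_le (by simpa using hi) hx, smul_zero]

theorem exp_aeval_trunc_log_of_pow_eq_zero {A : Type*} [NormedRing A] [NormedAlgebra ℚ A]
    [CompleteSpace A] {u : A} {n : ℕ} (hu : u ^ (n + 1) = 0) :
    exp (aeval u (PowerSeries.trunc (n + 1) (PowerSeries.log ℚ))) = 1 + u := by
  have hN : aeval u (PowerSeries.trunc (n + 1) (PowerSeries.log ℚ)) ^ (n + 1) = 0 := by
    rw [← map_pow]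
    exact aeval_eq_zero_of_X_pow_dvd (pow_dvd_pow_of_dvd (X_dvd_trunc_log _) _) hu
  rw [exp_eq_aeval_trunc_of_pow_eq_zero hN, ← aeval_comp,
    ← sub_add_cancel (PowerSeries.trunc (n + 1) (PowerSeries.exp ℚ) |>.comp _) (1 + X), map_add,
    aeval_eq_zero_of_X_pow_dvd (X_pow_succ_dvd_trunc_exp_comp_trunc_log_sub n) hu, zero_add]
  simp

theorem exp_smul_of_isIdempotentElem {𝕂 A : Type*} [RCLike 𝕂] [NormedRing A] [NormedAlgebra 𝕂 A]
    [CompleteSpace A] (c : 𝕂) {e : A} (he : IsIdempotentElem e) :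
    exp (c • e) = 1 + (exp c - 1) • e := by
  have hsum := ((exp_series_hasSum_exp' (𝕂 := 𝕂) c).smul_const e).add (hasSum_ite_eq 0 (1 - e))
  have hterm : ∀ n : ℕ, ((n ! : 𝕂)⁻¹ • c ^ n) • e + (if n = 0 then 1 - e else 0) =
      (n ! : 𝕂)⁻¹ • (c • e) ^ n := by
    rintro (_ | n)
    · simp
    · rw [_root_.smul_pow, he.pow_succ_eq, smul_smul, if_neg n.succ_ne_zero, add_zero, smul_eq_mul]
  simp only [hterm] at hsum
  rw [(exp_series_hasSum_exp' (𝕂 := 𝕂) (c • e)).unique hsum, sub_smul, one_smul]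
  abel

end NormedSpace

section Commutative

variable {A : Type*} [NormedCommRing A] [NormedAlgebra ℂ A] [CompleteSpace A]

/- `1 - e + x * e` acts as `x` on the corner `e A` and as the identity on `(1 - e) A`. -/
theorem exists_exp_eq_of_pow_sub_algebraMap_mul_eq_zero {x e : A} (he : IsIdempotentElem e)
    {l : ℂ} (hl : l ≠ 0) {k : ℕ} (h : (x - algebraMap ℂ A l) ^ k * e = 0) :
    ∃ b, exp b = 1 - e + x * e := by
  let _ := NormedAlgebra.restrictScalars ℚ ℂ A
  set u := l⁻¹ • ((x - algebraMap ℂ A l) * e)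
  have hu : u ^ (k + 1) = 0 := by
    rw [_root_.smul_pow, mul_pow, he.pow_succ_eq, pow_succ' (x - _), mul_assoc, h, mul_zero,
      smul_zero]
  refine ⟨Complex.log l • e + aeval u (PowerSeries.trunc (k + 1) (PowerSeries.log ℚ)), ?_⟩
  rw [exp_add, exp_smul_of_isIdempotentElem _ he, exp_aeval_trunc_log_of_pow_eq_zero hu,
    ← Complex.exp_eq_exp_ℂ, Complex.exp_log hl]
  have hl' : algebraMap ℂ A l⁻¹ * algebraMap ℂ A l = 1 := by
    rw [← map_mul, inv_mul_cancel₀ hl, map_one]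
  simp only [u, Algebra.smul_def, map_sub, map_one]
  linear_combination (algebraMap ℂ A l - 1) * algebraMap ℂ A l⁻¹ * (x - algebraMap ℂ A l) * he.eq +
    (x - algebraMap ℂ A l) * e * hl'

theorem exists_exp_eq_of_prod_pow_sub_algebraMap_mul_eq_zero (x : A) (m : ℂ → ℕ) {s : Finset ℂ}
    (hs : 0 ∉ s) {e : A} (he : IsIdempotentElem e)
    (h : (∏ l ∈ s, (x - algebraMap ℂ A l) ^ m l) * e = 0) : ∃ b, exp b = 1 - e + x * e := by
  induction s using Finset.induction_on generalizing e with
  | empty => exact ⟨0, by simp_all⟩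
  | insert a s ha ih =>
    rw [Finset.prod_insert ha] at h
    have hcop : IsCoprime ((x - algebraMap ℂ A a) ^ m a)
        (∏ l ∈ s, (x - algebraMap ℂ A l) ^ m l) :=
      IsCoprime.prod_right fun l hl =>
        (isCoprime_sub_algebraMap x (ne_of_mem_of_not_mem hl ha).symm).pow
    obtain ⟨e₁, e₂, he₁, he₂, horth, rfl, h₁, h₂⟩ := he.exists_split_of_isCoprime hcop h
    obtain ⟨b₁, hb₁⟩ := exists_exp_eq_of_pow_sub_algebraMap_mul_eq_zero he₁
      (ne_of_mem_of_not_mem (Finset.mem_insert_self a s) hs) h₁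
    obtain ⟨b₂, hb₂⟩ := ih (fun h0 => hs (Finset.mem_insert_of_mem h0)) he₂ h₂
    let _ := NormedAlgebra.restrictScalars ℚ ℂ A
    refine ⟨b₁ + b₂, ?_⟩
    rw [exp_add, hb₁, hb₂]
    linear_combination (1 - x) ^ 2 * horth

theorem NormedCommRing.exists_exp_eq_of_aeval_eq_zero {x : A} {χ : ℂ[X]} (hχ : aeval x χ = 0)
    (h0 : χ.eval 0 ≠ 0) : ∃ b, exp b = x := by
  classical
  have hχ0 : χ ≠ 0 := by rintro rfl; simp at h0
  have hfac := C_leadingCoeff_mul_prod_multiset_X_sub_C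
    (IsAlgClosed.card_roots_eq_natDegree (p := χ))
  rw [Finset.prod_multiset_map_count] at hfac
  have hprod : ∏ l ∈ χ.roots.toFinset, (x - algebraMap ℂ A l) ^ χ.roots.count l = 0 := by
    rw [← hfac, map_mul, aeval_C, ← Algebra.smul_def, smul_eq_zero] at hχ
    simpa using hχ.resolve_left (leadingCoeff_ne_zero.mpr hχ0)
  obtain ⟨b, hb⟩ := exists_exp_eq_of_prod_pow_sub_algebraMap_mul_eq_zero x _
    (fun h => h0 ((mem_roots hχ0).mp (Multiset.mem_toFinset.mp h))) IsIdempotentElem.one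
    (by rw [hprod, zero_mul])
  exact ⟨b, by rw [hb]; simp⟩

end Commutative

theorem exists_exp_eq_of_aeval_eq_zero {A : Type*} [NormedRing A] [NormedAlgebra ℂ A] {x : A}
    {χ : ℂ[X]} (hχ : aeval x χ = 0) (h0 : χ.eval 0 ≠ 0) : ∃ b, exp b = x := by
  set S := Algebra.adjoin ℂ {x}
  have hcomm := Algebra.isMulCommutative_adjoin ℂ (s := {x}) (by simp)
  let _ : NormedCommRing S := { (inferInstance : NormedRing S) with mul_comm := hcomm.is_comm.comm }
  have : FiniteDimensional ℂ S := Algebra.finite_adjoin_simple_of_isIntegral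
    (IsAlgebraic.isIntegral ⟨χ, by rintro rfl; simp at h0, hχ⟩)
  have : CompleteSpace S := FiniteDimensional.complete ℂ S
  obtain ⟨b, hb⟩ := NormedCommRing.exists_exp_eq_of_aeval_eq_zero
    (x := ⟨x, Algebra.self_mem_adjoin_singleton ℂ x⟩) (Subtype.ext (by simpa using hχ)) h0
  let _ := NormedAlgebra.restrictScalars ℚ ℂ S
  let _ := (NormedAlgebra.restrictScalars ℚ ℂ A).toAlgebra
  exact ⟨b, (map_exp S.val continuous_subtype_val b).symm.trans (congrArg S.val hb)⟩

open Matrix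

theorem stmt12_general (n : ℕ)
    (R : Matrix (Fin n) (Fin n) ℂ) (hR : IsUnit R) :
    (∃ B : Matrix (Fin n) (Fin n) ℂ, NormedSpace.exp B = R) ∧
    (∃ B : Matrix (Fin n) (Fin n) ℂ,
      NormedSpace.exp ((2 * (Real.pi : ℂ) * Complex.I) • B) = R) := by
  let _ : NormedRing (Matrix (Fin n) (Fin n) ℂ) := Matrix.linftyOpNormedRing
  let _ : NormedAlgebra ℂ (Matrix (Fin n) (Fin n) ℂ) := Matrix.linftyOpNormedAlgebra
  have h0 : R.charpoly.eval 0 ≠ 0 := by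
    rw [← coeff_zero_eq_eval_zero]
    intro h
    exact ((isUnit_iff_isUnit_det R).mp hR).ne_zero
      (by rw [det_eq_sign_charpoly_coeff, h, mul_zero])
  obtain ⟨B, hB⟩ := exists_exp_eq_of_aeval_eq_zero (aeval_self_charpoly R) h0
  have hc : 2 * (Real.pi : ℂ) * Complex.I ≠ 0 := by simp [Real.pi_ne_zero, Complex.I_ne_zero]
  exact ⟨⟨B, hB⟩, ⟨(2 * (Real.pi : ℂ) * Complex.I)⁻¹ • B, by rwa [smul_inv_smul₀ hc]⟩⟩

/-- The matrix exponential is surjective onto `GL(n,ℂ)`: every invertible complex matrix `R`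
is `exp(B)` for some matrix `B`; in particular it is `exp(2πi B)` for some matrix `B`. -/
theorem stmt12 (n : ℕ) (hn : 1 ≤ n)
    (R : Matrix (Fin n) (Fin n) ℂ) (hR : IsUnit R) :
    (∃ B : Matrix (Fin n) (Fin n) ℂ, NormedSpace.exp B = R) ∧
    (∃ B : Matrix (Fin n) (Fin n) ℂ,
      NormedSpace.exp ((2 * (Real.pi : ℂ) * Complex.I) • B) = R) :=
  stmt12_general n R hR
end

section
/- Let n ≥ 1, let R be an invertible n×n complex matrix, and let h > 0 be a real number. Then there exists a map Ψ : ℂ → M(n,ℂ) such that each entry of Ψ is an entire function (complex-differentiable on all of ℂ), Ψ(z) is invertible for every z ∈ ℂ, and Ψ(z + h) = Ψ(z)·R for every z ∈ ℂ. -/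
/-!
Write `R = S (1 + M)` (multiplicative Jordan–Chevalley decomposition) with `S` invertible and
diagonalizable, `M` nilpotent, and `S M = M S`. Both factors have explicit entire powers
`w ↦ S ^ w` and `w ↦ (1 + M) ^ w`: the first is `p_w(S)` where the polynomial `p_w`
interpolates `μ ↦ μ ^ w` on the spectrum of `S`, the second is the binomial series
`∑ₖ (w choose k) Mᵏ`, which terminates. Each satisfies `Φ (w + 1) = Φ w * factor`, and since
the factors commute, `Ψ z = S ^ (z / h) * (1 + M) ^ (z / h)` works.
-/

open Polynomial Finset

theorem Module.End.IsSemisimple.ext_of_hasEigenvector {K V : Type*} [Field K] [IsAlgClosed K]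
    [AddCommGroup V] [Module K V] [FiniteDimensional K V] {f g₁ g₂ : Module.End K V}
    (hf : f.IsSemisimple) (h : ∀ μ v, f.HasEigenvector μ v → g₁ v = g₂ v) :
    g₁ = g₂ := by
  suffices ⊤ ≤ LinearMap.eqLocus g₁ g₂ from LinearMap.ext fun v => this Submodule.mem_top
  rw [← hf.iSup_eigenspace_eq_top]
  refine iSup_le fun μ v hv => ?_
  rcases eq_or_ne v 0 with rfl | hv0
  · simp
  · exact h μ v ⟨hv, hv0⟩

theorem Module.End.exists_isSemisimple_mul_one_add_isNilpotent {K V : Type*} [Field K]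
    [PerfectField K] [AddCommGroup V] [Module K V] [FiniteDimensional K V] {f : Module.End K V}
    (hf : IsUnit f) :
    ∃ s m : Module.End K V, s.IsSemisimple ∧ IsUnit s ∧ IsNilpotent m ∧ Commute s m ∧
      f = s * (1 + m) := by
  obtain ⟨n, hn, s, hs, hn_nil, hs_ss, hf_eq⟩ := f.exists_isNilpotent_isSemisimple
  have hfn : Commute f n := Algebra.commute_of_mem_adjoin_self hn
  have hsn : Commute s n := Algebra.commute_of_mem_adjoin_singleton_of_commute hn
    (Algebra.commute_of_mem_adjoin_self hs).symm
  have hs_unit : IsUnit s := by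
    simpa [hf_eq] using hn_nil.neg.isUnit_add_left_of_commute hf hfn.symm.neg_left
  obtain ⟨u, rfl⟩ := hs_unit
  refine ⟨u, ↑u⁻¹ * n, hs_ss, u.isUnit, hsn.units_inv_left.isNilpotent_mul_left hn_nil,
    (Commute.units_inv_right (Commute.refl _)).mul_right hsn, ?_⟩
  rw [mul_add, mul_one, Units.mul_inv_cancel_left, hf_eq, add_comm]

theorem differentiable_ring_choose {𝕜 : Type*} [NontriviallyNormedField 𝕜] [CharZero 𝕜]
    (k : ℕ) :
    Differentiable 𝕜 fun z : 𝕜 => Ring.choose z k := by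
  simp only [Ring.choose_eq_smul, ← aeval_eq_smeval, smul_eq_mul]
  exact (Polynomial.differentiable_aeval _).const_mul _

theorem differentiable_sum_smul_apply {m n κ : Type*} (s : Finset κ) {f : κ → ℂ → ℂ}
    (hf : ∀ k ∈ s, Differentiable ℂ (f k)) (A : κ → Matrix m n ℂ) (i : m) (j : n) :
    Differentiable ℂ fun z => (∑ k ∈ s, f k z • A k) i j := by
  simp only [Matrix.sum_apply, Matrix.smul_apply, smul_eq_mul]
  exact Differentiable.fun_sum fun k hk => (hf k hk).mul_const _

section BinomialPow

variable {A : Type*} [Ring A] [Algebra ℂ A]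

/-- `(1 + M) ^ z` truncated after `K` terms; exact once `M ^ K = 0`. -/
noncomputable def binomialPow (M : A) (K : ℕ) (z : ℂ) : A :=
  ∑ k ∈ range K, Ring.choose z k • M ^ k

theorem Commute.binomialPow_right {a M : A} (h : Commute a M) (K : ℕ) (z : ℂ) :
    Commute a (binomialPow M K z) :=
  Commute.sum_right _ _ _ fun k _ => (h.pow_right k).smul_right _

theorem binomialPow_add_one_add (M : A) (K : ℕ) (z : ℂ) :
    binomialPow M (K + 1) (z + 1) + Ring.choose z K • M ^ (K + 1) =
      binomialPow M (K + 1) z * (1 + M) := by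
  induction K with
  | zero => simp [binomialPow]
  | succ K ih =>
    rw [binomialPow, sum_range_succ, ← binomialPow, Ring.choose_succ_succ, add_smul,
      ← add_assoc, ih, binomialPow, binomialPow, sum_range_succ _ (K + 1)]
    simp only [add_mul, mul_add, mul_one, smul_mul_assoc, ← pow_succ]
    abel

theorem binomialPow_add_one {M : A} {K : ℕ} (hM : M ^ K = 0) (z : ℂ) :
    binomialPow M (K + 1) (z + 1) = binomialPow M (K + 1) z * (1 + M) := by
  rw [← binomialPow_add_one_add, pow_succ, hM, zero_mul, smul_zero, add_zero]

theorem isNilpotent_binomialPow_sub_one {M : A} (hM : IsNilpotent M) (K : ℕ) (z : ℂ) :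
    IsNilpotent (binomialPow M (K + 1) z - 1) := by
  have hsplit : binomialPow M (K + 1) z - 1 =
      M * ∑ k ∈ range K, Ring.choose z (k + 1) • M ^ k := by
    rw [binomialPow, sum_range_succ', Ring.choose_zero_right, pow_zero, one_smul,
      add_sub_cancel_right, mul_sum]
    simp only [mul_smul_comm, ← pow_succ']
  rw [hsplit]
  exact Commute.isNilpotent_mul_right
    (Commute.sum_right _ _ _ fun k _ => ((Commute.refl M).pow_right k).smul_right _) hM

end BinomialPow

variable {ι : Type*} [Fintype ι] [DecidableEq ι]

/-- `Φ z` plays the role of `R ^ (z / c)`. -/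
structure IsEntireQuasiPeriodic (c : ℂ) (R : Matrix ι ι ℂ) (Φ : ℂ → Matrix ι ι ℂ) : Prop where
  differentiable_apply : ∀ i j, Differentiable ℂ fun z => Φ z i j
  isUnit : ∀ z, IsUnit (Φ z)
  add_period : ∀ z, Φ (z + c) = Φ z * R

namespace IsEntireQuasiPeriodic

variable {c : ℂ} {R R' : Matrix ι ι ℂ} {Φ Ψ : ℂ → Matrix ι ι ℂ}

theorem mul (hΦ : IsEntireQuasiPeriodic c R Φ) (hΨ : IsEntireQuasiPeriodic c R' Ψ)
    (hR : ∀ z, Commute R (Ψ z)) : IsEntireQuasiPeriodic c (R * R') fun z => Φ z * Ψ z where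
  differentiable_apply i j := by
    simp only [Matrix.mul_apply]
    exact Differentiable.fun_sum fun k _ =>
      (hΦ.differentiable_apply i k).mul (hΨ.differentiable_apply k j)
  isUnit z := (hΦ.isUnit z).mul (hΨ.isUnit z)
  add_period z := by
    rw [hΦ.add_period, hΨ.add_period, mul_assoc, ← mul_assoc R, (hR z).eq, mul_assoc,
      mul_assoc]

theorem comp_div (hΦ : IsEntireQuasiPeriodic 1 R Φ) (hc : c ≠ 0) :
    IsEntireQuasiPeriodic c R fun z => Φ (z / c) where
  differentiable_apply i j := (hΦ.differentiable_apply i j).comp (differentiable_id.div_const c)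
  isUnit z := hΦ.isUnit _
  add_period z := by rw [add_div, div_self hc, hΦ.add_period]

end IsEntireQuasiPeriodic

theorem isEntireQuasiPeriodic_binomialPow {M : Matrix ι ι ℂ} {K : ℕ} (hM : M ^ K = 0) :
    IsEntireQuasiPeriodic 1 (1 + M) (binomialPow M (K + 1)) where
  differentiable_apply :=
    differentiable_sum_smul_apply _ (fun k _ => differentiable_ring_choose k) _
  isUnit z := by simpa using (isNilpotent_binomialPow_sub_one ⟨K, hM⟩ K z).isUnit_one_add
  add_period := binomialPow_add_one hM

namespace Matrix

theorem ext_of_hasEigenvector {S A B : Matrix ι ι ℂ} (hS : Module.End.IsSemisimple (toLin' S))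
    (h : ∀ μ v, Module.End.HasEigenvector (toLin' S) μ v → A *ᵥ v = B *ᵥ v) : A = B :=
  toLin'.injective (hS.ext_of_hasEigenvector fun μ v hv => by simpa using h μ v hv)

theorem aeval_mulVec_of_hasEigenvector {S : Matrix ι ι ℂ} {μ : ℂ} {v : ι → ℂ}
    (hv : Module.End.HasEigenvector (toLin' S) μ v) (p : ℂ[X]) :
    aeval S p *ᵥ v = p.eval μ • v := by
  rw [← toLinAlgEquiv'_apply, ← aeval_algHom_apply]
  exact Module.End.aeval_apply_of_hasEigenvector hv

theorem mem_spectrum_of_hasEigenvector {S : Matrix ι ι ℂ} {μ : ℂ} {v : ι → ℂ}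
    (hv : Module.End.HasEigenvector (toLin' S) μ v) : μ ∈ spectrum ℂ S := by
  rw [← spectrum_toLin', ← Module.End.hasEigenvalue_iff_mem_spectrum]
  exact Module.End.hasEigenvalue_of_hasEigenvector hv

end Matrix

open Matrix

/-- `S ^ z` for diagonalizable `S`: it acts on a `μ`-eigenvector as `μ ^ z`. -/
noncomputable def spectralPow (S : Matrix ι ι ℂ) (z : ℂ) : Matrix ι ι ℂ :=
  aeval S (Lagrange.interpolate S.finite_spectrum.toFinset id fun μ => μ ^ z)

theorem spectralPow_mulVec_of_hasEigenvector {S : Matrix ι ι ℂ} {μ : ℂ} {v : ι → ℂ}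
    (hv : Module.End.HasEigenvector (toLin' S) μ v) (z : ℂ) :
    spectralPow S z *ᵥ v = μ ^ z • v := by
  rw [spectralPow, aeval_mulVec_of_hasEigenvector hv]
  congr 1
  exact Lagrange.eval_interpolate_at_node _ (Set.injOn_id _)
    ((Set.Finite.mem_toFinset _).2 (mem_spectrum_of_hasEigenvector hv))

theorem isEntireQuasiPeriodic_spectralPow {S : Matrix ι ι ℂ} (hS : IsUnit S)
    (hss : Module.End.IsSemisimple (toLin' S)) : IsEntireQuasiPeriodic 1 S (spectralPow S) := by
  have hne : ∀ μ ∈ spectrum ℂ S, μ ≠ 0 := fun μ hμ h0 => spectrum.zero_notMem ℂ hS (h0 ▸ hμ)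
  refine ⟨fun i j => ?_, fun z => ?_, fun z => ?_⟩
  · simp only [spectralPow, Lagrange.interpolate_apply, map_sum, map_mul, aeval_C,
      Algebra.algebraMap_eq_smul_one, smul_mul_assoc, one_mul]
    exact differentiable_sum_smul_apply _ (fun μ hμ => differentiable_id.const_cpow
      (Or.inl (hne μ ((Set.Finite.mem_toFinset _).1 hμ)))) _ i j
  · refine IsUnit.of_mul_eq_one (spectralPow S (-z))
      (ext_of_hasEigenvector hss fun μ v hv => ?_)
    have hμ := hne μ (mem_spectrum_of_hasEigenvector hv)
    rw [← mulVec_mulVec, spectralPow_mulVec_of_hasEigenvector hv, mulVec_smul,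
      spectralPow_mulVec_of_hasEigenvector hv, smul_smul, ← Complex.cpow_add _ _ hμ,
      neg_add_cancel, Complex.cpow_zero, one_smul, one_mulVec]
  · refine ext_of_hasEigenvector hss fun μ v hv => ?_
    have hμ := hne μ (mem_spectrum_of_hasEigenvector hv)
    have hSv : S *ᵥ v = μ • v := by simpa using hv.apply_eq_smul
    rw [← mulVec_mulVec, hSv, mulVec_smul, spectralPow_mulVec_of_hasEigenvector hv,
      spectralPow_mulVec_of_hasEigenvector hv, smul_smul, Complex.cpow_add _ _ hμ,
      Complex.cpow_one, mul_comm]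

theorem exists_isEntireQuasiPeriodic {R : Matrix ι ι ℂ} (hR : IsUnit R) :
    ∃ Φ, IsEntireQuasiPeriodic 1 R Φ := by
  let e : Matrix ι ι ℂ ≃ₐ[ℂ] Module.End ℂ (ι → ℂ) := toLinAlgEquiv'
  obtain ⟨s, m, hs_ss, hs, hm, hsm, hR_eq⟩ :=
    Module.End.exists_isSemisimple_mul_one_add_isNilpotent (hR.map e)
  obtain ⟨K, hK⟩ := hm.map e.symm
  have hR_SM : R = e.symm s * (1 + e.symm m) := e.injective (by simp [hR_eq])
  rw [hR_SM]
  have hS_ss : Module.End.IsSemisimple (toLin' (e.symm s)) := by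
    rwa [show toLin' (e.symm s) = s from e.apply_symm_apply s]
  exact ⟨_, (isEntireQuasiPeriodic_spectralPow (hs.map e.symm) hS_ss).mul
    (isEntireQuasiPeriodic_binomialPow hK) fun z => (hsm.map e.symm).binomialPow_right _ z⟩

theorem stmt13_general (n : ℕ)
    (R : Matrix (Fin n) (Fin n) ℂ) (hR : IsUnit R) (h : ℝ) (hh : 0 < h) :
    ∃ Ψ : ℂ → Matrix (Fin n) (Fin n) ℂ,
      (∀ i j : Fin n, Differentiable ℂ (fun z => Ψ z i j)) ∧
      (∀ z : ℂ, IsUnit (Ψ z)) ∧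
      (∀ z : ℂ, Ψ (z + (h : ℂ)) = Ψ z * R) := by
  obtain ⟨Φ, hΦ⟩ := exists_isEntireQuasiPeriodic hR
  have hΨ := hΦ.comp_div (c := (h : ℂ)) (by exact_mod_cast hh.ne')
  exact ⟨_, hΨ.differentiable_apply, hΨ.isUnit, hΨ.add_period⟩

/-- For any invertible `R ∈ GL(n,ℂ)` and `h > 0` there is a holomorphic map
`Ψ : ℂ → GL(n,ℂ)` (entrywise entire, with invertible values) such that the translation
`z ↦ z + h` acts with constant factor of automorphy `R`: `Ψ(z+h) = Ψ(z)·R`. -/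
theorem stmt13 (n : ℕ) (hn : 1 ≤ n)
    (R : Matrix (Fin n) (Fin n) ℂ) (hR : IsUnit R) (h : ℝ) (hh : 0 < h) :
    ∃ Ψ : ℂ → Matrix (Fin n) (Fin n) ℂ,
      (∀ i j : Fin n, Differentiable ℂ (fun z => Ψ z i j)) ∧
      (∀ z : ℂ, IsUnit (Ψ z)) ∧
      (∀ z : ℂ, Ψ (z + (h : ℂ)) = Ψ z * R) :=
  stmt13_general n R hR h hh
end
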